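/- Let n ≥ 1, let w : Fin n → Fin n → EReal have all entries in {−1, 0, 1, ⊤}, write d = d_w and t*(p,q) = halve(d(p,q)), and define x⁻(k,j) = −∞ if w k j = −1 and x⁻(k,j) = ⊤ otherwise. Fix i, j with d(i,j) finite (an integer). Then (t*(i,j) : EReal) ≤ min over k ∈ Fin n of max(t*(i,k), x⁻(k,j)). -/

import Mathlib

open scoped BigOperators

namespace MinMaxAPSP

/-- `p` is a walk from `i` to `j` with `ℓ` hops in the graph with weight matrix `w`
(an ordered pair is an edge iff its weight is not `⊤`). -/
def IsWalk {n : ℕ} (w : Fin n → Fin n → EReal) (i j : Fin n) (ℓ : ℕ)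
    (p : Fin (ℓ+1) → Fin n) : Prop :=
  p 0 = i ∧ p (Fin.last ℓ) = j ∧ ∀ k : Fin ℓ, w (p k.castSucc) (p k.succ) ≠ ⊤

/-- The weight of a walk with `ℓ` hops. -/
noncomputable def walkWeight {n : ℕ} (w : Fin n → Fin n → EReal) (ℓ : ℕ)
    (p : Fin (ℓ+1) → Fin n) : EReal :=
  ∑ k : Fin ℓ, w (p k.castSucc) (p k.succ)

/-- The distance from `i` to `j`: the infimum of the weights of all walks from `i` to `j`
(`⊤` if there is no walk). -/
noncomputable def dist {n : ℕ} (w : Fin n → Fin n → EReal) (i j : Fin n) : EReal :=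
  sInf {x : EReal | ∃ ℓ, ∃ p : Fin (ℓ+1) → Fin n, IsWalk w i j ℓ p ∧ walkWeight w ℓ p = x}

/-- The infimum of the weights of all walks from `i` to `j` with at most `δ` hops
(`⊤` if there is no such walk). -/
noncomputable def distLE {n : ℕ} (w : Fin n → Fin n → EReal) (δ : ℕ) (i j : Fin n) : EReal :=
  sInf {x : EReal | ∃ ℓ ≤ δ, ∃ p : Fin (ℓ+1) → Fin n, IsWalk w i j ℓ p ∧ walkWeight w ℓ p = x}

/-- `w` is `δ`-regular. -/
def IsRegular {n : ℕ} (w : Fin n → Fin n → EReal) (δ : ℕ) : Prop :=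
  ∀ i j : Fin n,
    (dist w i j ≠ ⊥ → dist w i j = distLE w δ i j) ∧
    (dist w i j = ⊥ →
      ∃ ℓ ≤ δ, ∃ p : Fin (ℓ+1) → Fin n, IsWalk w i j ℓ p ∧ walkWeight w ℓ p < 0)

/-- All entries of `w` are in `{-1, 0, 1, ⊤}`. -/
def EntriesInMinusOneZeroOneTop {n : ℕ} (w : Fin n → Fin n → EReal) : Prop :=
  ∀ i j, w i j = -1 ∨ w i j = 0 ∨ w i j = 1 ∨ w i j = ⊤

/-- `p` is a shortest walk from `i` to `j` under `w`. -/
def IsShortestWalk {n : ℕ} (w : Fin n → Fin n → EReal) (i j : Fin n) (ℓ : ℕ)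
    (p : Fin (ℓ+1) → Fin n) : Prop :=
  IsWalk w i j ℓ p ∧ walkWeight w ℓ p = dist w i j

/-- `wc` is a canonical graph of `w`. -/
def IsCanonical {n : ℕ} (w wc : Fin n → Fin n → EReal) : Prop :=
  EntriesInMinusOneZeroOneTop wc ∧
  ∀ (i j : Fin n) (ℓ : ℕ) (p : Fin (ℓ+1) → Fin n), IsShortestWalk w i j ℓ p →
    ∃ ℓ' ≤ ℓ, ∃ p' : Fin (ℓ'+1) → Fin n,
      IsShortestWalk wc i j ℓ' p' ∧
      walkWeight wc ℓ' p' = walkWeight w ℓ p ∧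
      (ℓ' = 1 ∨ ∀ k : Fin ℓ', wc (p' k.castSucc) (p' k.succ) ≠ 0)

/-- `halve x = ⌈x/2⌉` for finite `x`, and `halve (⊥) = ⊥`, `halve (⊤) = ⊤`. -/
noncomputable def halve (x : EReal) : EReal :=
  if x = ⊤ then ⊤ else if x = ⊥ then ⊥ else (((⌈x.toReal / 2⌉ : ℤ) : ℝ) : EReal)

lemma halve_mono : Monotone halve := by
  intro a b hab
  unfold halve
  by_cases hb_top : b = ⊤
  · simp [hb_top]
  by_cases ha_bot : a = ⊥
  · simp [ha_bot]
  have ha_top : a ≠ ⊤ := ne_top_of_le_ne_top hb_top hab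
  have hb_bot : b ≠ ⊥ := ne_bot_of_le_ne_bot ha_bot hab
  rw [if_neg ha_top, if_neg hb_top, if_neg ha_bot, if_neg hb_bot]
  have h := EReal.toReal_le_toReal hab ha_bot hb_top
  exact_mod_cast Int.ceil_le_ceil (by linarith)

section Walks

variable {n ℓ : ℕ} {w : Fin n → Fin n → EReal} {i j k : Fin n} {p : Fin (ℓ + 1) → Fin n}

lemma snoc_castSucc_succ (p : Fin (ℓ + 1) → Fin n) (j : Fin n) (m : Fin ℓ) :
    (Fin.snoc p j : Fin (ℓ + 2) → Fin n) m.castSucc.succ = p m.succ := by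
  rw [Fin.succ_castSucc, Fin.snoc_castSucc]

lemma IsWalk.snoc (hp : IsWalk w i k ℓ p) (hkj : w k j ≠ ⊤) :
    IsWalk w i j (ℓ + 1) (Fin.snoc p j) := by
  obtain ⟨h_start, h_end, h_edge⟩ := hp
  refine ⟨?_, Fin.snoc_last .., fun m => ?_⟩
  · exact (Fin.snoc_castSucc (i := 0) ..).trans h_start
  · induction m using Fin.lastCases with
    | last => simpa [Fin.snoc_castSucc, h_end] using hkj
    | cast m => simpa [snoc_castSucc_succ] using h_edge m

lemma walkWeight_snoc (w : Fin n → Fin n → EReal) (p : Fin (ℓ + 1) → Fin n) (j : Fin n) :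
    walkWeight w (ℓ + 1) (Fin.snoc p j) = walkWeight w ℓ p + w (p (Fin.last ℓ)) j := by
  simp [walkWeight, Fin.sum_univ_castSucc, snoc_castSucc_succ]

lemma dist_le_walkWeight (hp : IsWalk w i j ℓ p) : dist w i j ≤ walkWeight w ℓ p :=
  sInf_le ⟨ℓ, p, hp, rfl⟩

lemma dist_le_dist_of_le_zero (hkj : w k j ≤ 0) : dist w i j ≤ dist w i k := by
  refine le_sInf ?_
  rintro _ ⟨ℓ, p, hp, rfl⟩
  have hkj_top : w k j ≠ ⊤ := ne_top_of_le_ne_top EReal.zero_ne_top hkj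
  calc dist w i j ≤ walkWeight w (ℓ + 1) (Fin.snoc p j) := dist_le_walkWeight (hp.snoc hkj_top)
    _ = walkWeight w ℓ p + w k j := by rw [walkWeight_snoc, hp.2.1]
    _ ≤ walkWeight w ℓ p := add_le_of_nonpos_right hkj

end Walks

theorem stmt11_general (n : ℕ) (w : Fin n → Fin n → EReal)
    (i j : Fin n) :
    halve (dist w i j) ≤
      ⨅ k : Fin n, max (halve (dist w i k)) (if w k j = -1 then (⊥ : EReal) else ⊤) := by
  refine le_iInf fun k => ?_
  split_ifs with hkj
  · rw [max_bot_right]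
    exact halve_mono (dist_le_dist_of_le_zero (hkj ▸ by norm_num))
  · exact le_max_of_le_right le_top

/-- `t*(i,j)` lower-bounds the `x⁻` (min,max)-product entry. -/
theorem stmt11 (n : ℕ) (hn : 1 ≤ n) (w : Fin n → Fin n → EReal)
    (hw : EntriesInMinusOneZeroOneTop w)
    (i j : Fin n) (hfin : dist w i j ≠ ⊤ ∧ dist w i j ≠ ⊥) :
    halve (dist w i j) ≤
      ⨅ k : Fin n, max (halve (dist w i k)) (if w k j = -1 then (⊥ : EReal) else ⊤) :=
  stmt11_general n w i j

end MinMaxAPSP
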